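/- In any associative algebra with elements X,Y,Z satisfying {X,Y}=Z+ω₃, {Z,Y}=X+ω₁, {X,Z}=Y+ω₂ (scalars ωᵢ), the elements J₊ = (Y+Z)(X-1/2) - (ω₂+ω₃)/2 and J₋ = (Y-Z)(X+1/2) + (ω₂-ω₃)/2 satisfy {X,J₊} = J₊ and {X,J₋} = -J₋; consequently J₊² and J₋² commute with X. -/
import Mathlib


/-- J₊ = (Y+Z)(X - 1/2) - (ω₂+ω₃)/2. -/
noncomputable def Jplus {K A : Type*} [Field K] [Ring A] [Algebra K A]
    (X Y Z : A) (ω₂ ω₃ : K) : A :=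
  (Y + Z) * (X - algebraMap K A (1/2)) - algebraMap K A ((ω₂ + ω₃) / 2)

/-- J₋ = (Y-Z)(X + 1/2) + (ω₂-ω₃)/2. -/
noncomputable def Jminus {K A : Type*} [Field K] [Ring A] [Algebra K A]
    (X Y Z : A) (ω₂ ω₃ : K) : A :=
  (Y - Z) * (X + algebraMap K A (1/2)) + algebraMap K A ((ω₂ - ω₃) / 2)

/-- In any associative algebra with the Bannai–Ito relations, {X,J₊} = J₊ and
{X,J₋} = -J₋; consequently J₊² and J₋² commute with X. -/
theorem stmt8 {K A : Type*} [Field K] [CharZero K] [Ring A] [Algebra K A]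
    (X Y Z : A) (ω₁ ω₂ ω₃ : K)
    (h1 : X * Y + Y * X = Z + algebraMap K A ω₃)
    (h2 : Z * Y + Y * Z = X + algebraMap K A ω₁)
    (h3 : X * Z + Z * X = Y + algebraMap K A ω₂) :
    X * Jplus X Y Z ω₂ ω₃ + Jplus X Y Z ω₂ ω₃ * X = Jplus X Y Z ω₂ ω₃ ∧
    X * Jminus X Y Z ω₂ ω₃ + Jminus X Y Z ω₂ ω₃ * X = -Jminus X Y Z ω₂ ω₃ ∧
    Commute X (Jplus X Y Z ω₂ ω₃ ^ 2) ∧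
    Commute X (Jminus X Y Z ω₂ ω₃ ^ 2) := by
  set a := algebraMap K A with ha
  set h : A := a (1/2) with hhdef
  set c : A := a ((ω₂ + ω₃)/2) with hcdef
  set d : A := a ((ω₂ - ω₃)/2) with hddef
  have hh : h + h = 1 := by
    rw [hhdef, ← map_add]
    norm_num
  have hhX : h * X = X * h := Algebra.commutes _ X
  have hcX : c * X = X * c := Algebra.commutes _ X
  have hdX : d * X = X * d := Algebra.commutes _ X
  have hcc : c + c = a ω₂ + a ω₃ := by
    rw [hcdef, ← map_add, ← map_add]; congr 1; ring
  have hdd : d + d = a ω₂ - a ω₃ := by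
    rw [hddef, ← map_add, ← map_sub]; congr 1; ring
  have hS : X * (Y + Z) + (Y + Z) * X = (Y + Z) + (c + c) := by
    have e : X * (Y + Z) + (Y + Z) * X = (X * Y + Y * X) + (X * Z + Z * X) := by
      noncomm_ring
    rw [e, h1, h3, hcc]
    abel
  have hS' : X * (Y - Z) + (Y - Z) * X = -(Y - Z) - (d + d) := by
    have e : X * (Y - Z) + (Y - Z) * X = (X * Y + Y * X) - (X * Z + Z * X) := by
      noncomm_ring
    rw [e, h1, h3, hdd]
    abel
  have hp : X * Jplus X Y Z ω₂ ω₃ + Jplus X Y Z ω₂ ω₃ * X = Jplus X Y Z ω₂ ω₃ := by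
    rw [Jplus]
    calc X * ((Y + Z) * (X - h) - c) + ((Y + Z) * (X - h) - c) * X
        = (X * (Y + Z) + (Y + Z) * X) * (X - h) - c * X - X * c
          + (Y + Z) * (X * h - h * X) := by noncomm_ring
      _ = ((Y + Z) + (c + c)) * (X - h) - X * c - X * c
          + (Y + Z) * (X * h - X * h) := by rw [hS, hcX, hhX]
      _ = (Y + Z) * (X - h) - c * (h + h) + ((c * X - X * c) + (c * X - X * c)) := by
          noncomm_ring
      _ = (Y + Z) * (X - h) - c := by rw [hh, mul_one, hcX, sub_self, add_zero, add_zero]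
  have hm : X * Jminus X Y Z ω₂ ω₃ + Jminus X Y Z ω₂ ω₃ * X = -Jminus X Y Z ω₂ ω₃ := by
    rw [Jminus]
    calc X * ((Y - Z) * (X + h) + d) + ((Y - Z) * (X + h) + d) * X
        = (X * (Y - Z) + (Y - Z) * X) * (X + h) + d * X + X * d
          + (Y - Z) * (h * X - X * h) := by noncomm_ring
      _ = (-(Y - Z) - (d + d)) * (X + h) + X * d + X * d
          + (Y - Z) * (X * h - X * h) := by rw [hS', hdX, hhX]
      _ = -((Y - Z) * (X + h)) - d * (h + h) + ((X * d - d * X) + (X * d - d * X)) := by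
          noncomm_ring
      _ = -((Y - Z) * (X + h) + d) := by
          rw [hh, mul_one, hdX, sub_self, add_zero, add_zero]; noncomm_ring
  refine ⟨hp, hm, ?_, ?_⟩
  · have hx : X * Jplus X Y Z ω₂ ω₃ = Jplus X Y Z ω₂ ω₃ - Jplus X Y Z ω₂ ω₃ * X :=
      eq_sub_of_add_eq hp
    show X * Jplus X Y Z ω₂ ω₃ ^ 2 = Jplus X Y Z ω₂ ω₃ ^ 2 * X
    set J := Jplus X Y Z ω₂ ω₃
    calc X * J ^ 2 = (X * J) * J := by noncomm_ring
      _ = (J - J * X) * J := by rw [hx]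
      _ = J * J - J * (X * J) := by noncomm_ring
      _ = J * J - J * (J - J * X) := by rw [hx]
      _ = J ^ 2 * X := by noncomm_ring
  · have hx : X * Jminus X Y Z ω₂ ω₃ = -Jminus X Y Z ω₂ ω₃ - Jminus X Y Z ω₂ ω₃ * X :=
      eq_sub_of_add_eq hm
    show X * Jminus X Y Z ω₂ ω₃ ^ 2 = Jminus X Y Z ω₂ ω₃ ^ 2 * X
    set J := Jminus X Y Z ω₂ ω₃
    calc X * J ^ 2 = (X * J) * J := by noncomm_ring
      _ = (-J - J * X) * J := by rw [hx]
      _ = -(J * J) - J * (X * J) := by noncomm_ring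
      _ = -(J * J) - J * (-J - J * X) := by rw [hx]
      _ = J ^ 2 * X := by noncomm_ring
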